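/- For m ≥ 2, a word w lies outside the support of the free Lie algebra L_{ℤ_m}(A) over ℤ/mℤ if and only if m divides c(w), equivalently if and only if every coefficient of the integer polynomial l*(w) is divisible by m. -/

import Mathlib

open MonoidAlgebra

attribute [local instance 100] LieRing.ofAssociativeRing

/-- The word `w` viewed as a monomial in the free associative algebra `K⟨A⟩`. -/
noncomputable def word (K : Type*) [CommRing K] {A : Type*} (w : List A) :
    MonoidAlgebra K (FreeMonoid A) :=
  MonoidAlgebra.single (FreeMonoid.ofList w) 1

/-- The adjoint `l*` of the left-normed Lie bracketing, defined by the recursion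
`l*(ε) = 0`, `l*(a) = a`, `l*(aub) = l*(au)·b − l*(ub)·a`. -/
noncomputable def lstar (K : Type*) [CommRing K] {A : Type*} :
    List A → MonoidAlgebra K (FreeMonoid A)
  | [] => 0
  | [a] => word K [a]
  | a :: b :: r =>
      lstar K (a :: (b :: r).dropLast) * word K [(b :: r).getLast (by simp)]
        - lstar K (b :: r) * word K [a]
  termination_by w => w.length
  decreasing_by
    · simp [List.length_dropLast]
    · simp

/-- The free Lie algebra `L_K(A)`: the Lie subalgebra of `K⟨A⟩` generated by the letters. -/
noncomputable def freeLie (K : Type*) [CommRing K] (A : Type*) :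
    LieSubalgebra K (MonoidAlgebra K (FreeMonoid A)) :=
  LieSubalgebra.lieSpan K _ {P | ∃ a : A, P = word K [a]}

/-!
Reduction modulo `m` maps `L_ℤ(A)` onto `L_{ℤ/m}(A)`, since both are generated by the letters.
Hence `w` lies outside the support of `L_{ℤ/m}(A)` iff `m` divides the coefficient of `w` in every
integer Lie polynomial, i.e. iff `m ∣ c(w)`. As `L_ℤ(A)` is spanned by the left-normed brackets
`l(v)`, this happens iff `m` divides every `(l(v), w) = (l*(w), v)`.
-/

section

variable {K : Type*} [CommRing K] {A : Type*}

variable (K) in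
noncomputable def lbrack : List A → MonoidAlgebra K (FreeMonoid A)
  | [] => 0
  | a :: v => v.foldl (fun P c => ⁅P, word K [c]⁆) (word K [a])

@[simp] lemma lbrack_nil : lbrack K ([] : List A) = 0 := rfl

@[simp] lemma lbrack_singleton (a : A) : lbrack K [a] = word K [a] := rfl

lemma lbrack_append_singleton {v : List A} (hv : v ≠ []) (c : A) :
    lbrack K (v ++ [c]) = ⁅lbrack K v, word K [c]⁆ := by
  obtain ⟨a, v, rfl⟩ := List.exists_cons_of_ne_nil hv
  simp [lbrack, List.foldl_append]

lemma lbrack_mem_freeLie (v : List A) : lbrack K v ∈ freeLie K A := by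
  induction v using List.reverseRecOn with
  | nil => exact zero_mem _
  | append_singleton v c ih =>
    have hc : word K [c] ∈ freeLie K A := LieSubalgebra.subset_lieSpan ⟨c, rfl⟩
    rcases eq_or_ne v [] with rfl | hv
    · simpa using hc
    · rw [lbrack_append_singleton hv]
      exact (freeLie K A).lie_mem ih hc

open scoped Classical in
lemma coeff_word (u v : List A) :
    (word K u).coeff (FreeMonoid.ofList v) = if u = v then 1 else 0 := by
  simp [word, Finsupp.single_apply]

open scoped Classical in
lemma coeff_mul_word_singleton (P : MonoidAlgebra K (FreeMonoid A)) (c : A) (v : List A) :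
    (P * word K [c]).coeff (FreeMonoid.ofList v) =
      if v.getLast? = some c then P.coeff (FreeMonoid.ofList v.dropLast) else 0 := by
  split_ifs with hv
  · obtain ⟨u, rfl⟩ : ∃ u, v = u ++ [c] := ⟨_, (List.dropLast_append_getLast? c hv).symm⟩
    rw [word, coeff_mul_single_eq_coeff_mul (FreeMonoid.ofList u), mul_one, List.dropLast_concat]
    intro d _
    rw [← FreeMonoid.toList.injective.eq_iff, ← FreeMonoid.toList.injective.eq_iff]
    simp
  · refine coeff_mul_single_of_forall_mul_ne _ _ fun d hd => hv ?_
    rw [← FreeMonoid.toList_ofList v, ← hd]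
    simp

open scoped Classical in
lemma coeff_word_singleton_mul (P : MonoidAlgebra K (FreeMonoid A)) (c : A) (v : List A) :
    (word K [c] * P).coeff (FreeMonoid.ofList v) =
      if v.head? = some c then P.coeff (FreeMonoid.ofList v.tail) else 0 := by
  split_ifs with hv
  · obtain ⟨u, rfl⟩ : ∃ u, v = c :: u := ⟨_, (List.eq_cons_of_mem_head? hv)⟩
    rw [word, coeff_single_mul_eq_mul_coeff (FreeMonoid.ofList u), one_mul, List.tail_cons]
    intro d _
    rw [← FreeMonoid.toList.injective.eq_iff, ← FreeMonoid.toList.injective.eq_iff]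
    simp
  · refine coeff_single_mul_of_forall_mul_ne _ _ fun d hd => hv ?_
    rw [← FreeMonoid.toList_ofList v, ← hd]
    simp

open scoped Classical in
lemma coeff_lbrack_append_singleton {u : List A} (hu : u ≠ []) (c : A) (w : List A) :
    (lbrack K (u ++ [c])).coeff (FreeMonoid.ofList w) =
      (if w.getLast? = some c then (lbrack K u).coeff (FreeMonoid.ofList w.dropLast) else 0) -
        if w.head? = some c then (lbrack K u).coeff (FreeMonoid.ofList w.tail) else 0 := by
  rw [lbrack_append_singleton hu, Ring.lie_def, coeff_sub, Finsupp.sub_apply,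
    coeff_mul_word_singleton, coeff_word_singleton_mul]

lemma coeff_lbrack_ofList_nil (v : List A) : (lbrack K v).coeff (FreeMonoid.ofList []) = 0 := by
  rcases List.eq_nil_or_concat' v with rfl | ⟨u, c, rfl⟩
  · rfl
  rcases eq_or_ne u [] with rfl | hu
  · simp only [List.nil_append, lbrack_singleton, coeff_word]; simp
  · simp only [coeff_lbrack_append_singleton hu]; simp

open scoped Classical in
lemma coeff_lstar_cons_cons (a b : A) (r v : List A) :
    (lstar K (a :: b :: r)).coeff (FreeMonoid.ofList v) =
      (if v.getLast? = some ((b :: r).getLast (List.cons_ne_nil b r)) then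
        (lstar K (a :: (b :: r).dropLast)).coeff (FreeMonoid.ofList v.dropLast) else 0) -
      if v.getLast? = some a then (lstar K (b :: r)).coeff (FreeMonoid.ofList v.dropLast) else 0 := by
  rw [lstar, coeff_sub, Finsupp.sub_apply, coeff_mul_word_singleton, coeff_mul_word_singleton]

/- Expanding `l(u c) = l(u) c - c l(u)`, the terms `l(u) c` and `c l(u)` pair with the terms
`l*(a u') b` and `l*(u' b) a` of the recursion for `l*(a u' b)`. -/
theorem coeff_lstar (w v : List A) :
    (lstar K w).coeff (FreeMonoid.ofList v) = (lbrack K v).coeff (FreeMonoid.ofList w) := by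
  classical
  induction w using lstar.induct generalizing v with
  | case1 => rw [coeff_lbrack_ofList_nil, lstar]; rfl
  | case2 a =>
    rw [lstar]
    rcases List.eq_nil_or_concat' v with rfl | ⟨u, c, rfl⟩
    · rw [lbrack_nil, coeff_word]; simp
    rcases eq_or_ne u [] with rfl | hu
    · rw [List.nil_append, lbrack_singleton, coeff_word, coeff_word]
      rcases eq_or_ne a c with rfl | hac
      · rfl
      · rw [if_neg (by simpa using hac), if_neg (by simpa using hac.symm)]
    · rw [coeff_word, coeff_lbrack_append_singleton hu, List.getLast?_singleton, List.head?_singleton,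
        List.dropLast_singleton, List.tail_cons, sub_self, if_neg]
      intro h
      simpa [hu] using congrArg List.length h
  | case3 a b r ih₁ ih₂ =>
    rw [coeff_lstar_cons_cons]
    rcases List.eq_nil_or_concat' v with rfl | ⟨u, c, rfl⟩
    · simp
    rcases eq_or_ne u [] with rfl | hu
    · simp only [List.nil_append, List.dropLast_singleton, ih₁, ih₂, lbrack_nil, coeff_zero,
        Finsupp.coe_zero, Pi.zero_apply, ite_self, sub_zero, lbrack_singleton, coeff_word]
      simp
    · simp only [List.dropLast_concat, ih₁, ih₂, coeff_lbrack_append_singleton hu]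
      have hlast : (a :: b :: r).getLast? = some ((b :: r).getLast (List.cons_ne_nil b r)) := by
        simp [List.getLast?_eq_some_getLast]
      rw [List.getLast?_concat, hlast, List.dropLast_cons_cons, List.head?_cons, List.tail_cons]
      simp only [@eq_comm _ (some c)]

lemma lie_word_mem_span_lbrack {P : MonoidAlgebra K (FreeMonoid A)}
    (hP : P ∈ Submodule.span K (Set.range (lbrack K))) (c : A) :
    ⁅P, word K [c]⁆ ∈ Submodule.span K (Set.range (lbrack K)) := by
  induction hP using Submodule.span_induction with
  | mem P hP =>
    obtain ⟨u, rfl⟩ := hP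
    rcases eq_or_ne u [] with rfl | hu
    · simp
    · rw [← lbrack_append_singleton hu]
      exact Submodule.subset_span ⟨_, rfl⟩
  | zero => simp
  | add P Q _ _ hP hQ => rw [add_lie]; exact add_mem hP hQ
  | smul r P _ hP => rw [smul_lie]; exact Submodule.smul_mem _ r hP

lemma lie_lbrack_mem_span_lbrack {P : MonoidAlgebra K (FreeMonoid A)}
    (hP : P ∈ Submodule.span K (Set.range (lbrack K))) (v : List A) :
    ⁅P, lbrack K v⁆ ∈ Submodule.span K (Set.range (lbrack K)) := by
  induction v using List.reverseRecOn generalizing P with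
  | nil => simp
  | append_singleton v c ih =>
    rcases eq_or_ne v [] with rfl | hv
    · simpa using lie_word_mem_span_lbrack hP c
    · rw [lbrack_append_singleton hv, leibniz_lie, ← lie_skew (lbrack K v)]
      exact add_mem (lie_word_mem_span_lbrack (ih hP) c)
        (neg_mem (ih (lie_word_mem_span_lbrack hP c)))

lemma lie_mem_span_lbrack {P Q : MonoidAlgebra K (FreeMonoid A)}
    (hP : P ∈ Submodule.span K (Set.range (lbrack K)))
    (hQ : Q ∈ Submodule.span K (Set.range (lbrack K))) :
    ⁅P, Q⁆ ∈ Submodule.span K (Set.range (lbrack K)) := by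
  induction hQ using Submodule.span_induction with
  | mem Q hQ => obtain ⟨v, rfl⟩ := hQ; exact lie_lbrack_mem_span_lbrack hP v
  | zero => simp
  | add Q R _ _ hQ hR => rw [lie_add]; exact add_mem hQ hR
  | smul r Q _ hQ => rw [lie_smul]; exact Submodule.smul_mem _ r hQ

theorem freeLie_toSubmodule_eq_span_lbrack :
    (freeLie K A).toSubmodule = Submodule.span K (Set.range (lbrack K)) := by
  refine le_antisymm ?_ (Submodule.span_le.mpr (Set.range_subset_iff.mpr lbrack_mem_freeLie))
  let L : LieSubalgebra K (MonoidAlgebra K (FreeMonoid A)) :=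
    { Submodule.span K (Set.range (lbrack K)) with lie_mem' := lie_mem_span_lbrack }
  change freeLie K A ≤ L
  rw [freeLie, LieSubalgebra.lieSpan_le]
  rintro _ ⟨a, rfl⟩
  exact Submodule.subset_span ⟨[a], rfl⟩

theorem forall_coeff_freeLie_mem_iff (I : Ideal K) (w : List A) :
    (∀ P ∈ freeLie K A, P.coeff (FreeMonoid.ofList w) ∈ I) ↔
      ∀ v : FreeMonoid A, (lstar K w).coeff v ∈ I := by
  refine ⟨fun h v => ?_, fun h P hP => ?_⟩
  · rw [← FreeMonoid.ofList_toList v, coeff_lstar]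
    exact h _ (lbrack_mem_freeLie _)
  · rw [← LieSubalgebra.mem_toSubmodule, freeLie_toSubmodule_eq_span_lbrack] at hP
    induction hP using Submodule.span_induction with
    | mem P hP =>
      obtain ⟨v, rfl⟩ := hP
      rw [← coeff_lstar]
      exact h _
    | zero => simp
    | add P Q _ _ hP hQ => rw [coeff_add, Finsupp.add_apply]; exact add_mem hP hQ
    | smul r P _ hP => rw [coeff_smul, Finsupp.smul_apply]; exact I.smul_mem r hP

lemma RingHom.map_lie {B C : Type*} [Ring B] [Ring C] (f : B →+* C) (x y : B) :
    f ⁅x, y⁆ = ⁅f x, f y⁆ := by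
  rw [Ring.lie_def, Ring.lie_def, map_sub, map_mul, map_mul]

lemma mapRingHom_smul {R S M : Type*} [CommRing R] [CommRing S] [Monoid M] (f : R →+* S) (r : R)
    (P : MonoidAlgebra R M) : mapRingHom M f (r • P) = f r • mapRingHom M f P := by
  ext x
  simp

section BaseChange

variable {R S : Type*} [CommRing R] [CommRing S] (f : R →+* S)

lemma mapRingHom_word (u : List A) : mapRingHom (FreeMonoid A) f (word R u) = word S u := by
  rw [word, word, mapRingHom_single, map_one]

lemma mapRingHom_mem_freeLie {P : MonoidAlgebra R (FreeMonoid A)} (hP : P ∈ freeLie R A) :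
    mapRingHom (FreeMonoid A) f P ∈ freeLie S A := by
  induction hP using LieSubalgebra.lieSpan_induction with
  | mem P hP =>
    obtain ⟨a, rfl⟩ := hP
    rw [mapRingHom_word]
    exact LieSubalgebra.subset_lieSpan ⟨a, rfl⟩
  | zero => simp
  | add P Q _ _ hP hQ => rw [map_add]; exact add_mem hP hQ
  | smul r P _ hP => rw [mapRingHom_smul]; exact (freeLie S A).smul_mem _ hP
  | lie P Q _ _ hP hQ => rw [RingHom.map_lie]; exact (freeLie S A).lie_mem hP hQ

lemma exists_mapRingHom_eq_of_mem_freeLie (hf : Function.Surjective f)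
    {Q : MonoidAlgebra S (FreeMonoid A)} (hQ : Q ∈ freeLie S A) :
    ∃ P ∈ freeLie R A, mapRingHom (FreeMonoid A) f P = Q := by
  induction hQ using LieSubalgebra.lieSpan_induction with
  | mem Q hQ =>
    obtain ⟨a, rfl⟩ := hQ
    exact ⟨word R [a], LieSubalgebra.subset_lieSpan ⟨a, rfl⟩, mapRingHom_word f [a]⟩
  | zero => exact ⟨0, zero_mem _, map_zero _⟩
  | add _ _ _ _ hP hQ =>
    obtain ⟨P, hP, rfl⟩ := hP
    obtain ⟨Q, hQ, rfl⟩ := hQ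
    exact ⟨P + Q, add_mem hP hQ, map_add _ P Q⟩
  | smul s _ _ hP =>
    obtain ⟨P, hP, rfl⟩ := hP
    obtain ⟨r, rfl⟩ := hf s
    exact ⟨r • P, (freeLie R A).smul_mem r hP, mapRingHom_smul f r P⟩
  | lie _ _ _ _ hP hQ =>
    obtain ⟨P, hP, rfl⟩ := hP
    obtain ⟨Q, hQ, rfl⟩ := hQ
    exact ⟨⁅P, Q⁆, (freeLie R A).lie_mem hP hQ, RingHom.map_lie _ P Q⟩

theorem forall_coeff_freeLie_eq_zero_iff (hf : Function.Surjective f) (x : FreeMonoid A) :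
    (∀ Q ∈ freeLie S A, Q.coeff x = 0) ↔ ∀ P ∈ freeLie R A, P.coeff x ∈ RingHom.ker f := by
  refine ⟨fun h P hP => ?_, fun h Q hQ => ?_⟩
  · rw [RingHom.mem_ker, ← coeff_mapRingHom]
    exact h _ (mapRingHom_mem_freeLie f hP)
  · obtain ⟨P, hP, rfl⟩ := exists_mapRingHom_eq_of_mem_freeLie f hf hQ
    rw [coeff_mapRingHom]
    exact h P hP

end BaseChange

end

theorem not_mem_support_zmod_iff_general {A : Type*} (m : ℕ)
    (w : List A) (c : ℤ)
    (hgen : ∀ k : ℤ, (∃ Q ∈ freeLie ℤ A, Q.coeff (FreeMonoid.ofList w) = k) ↔ c ∣ k) :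
    ((∀ Q ∈ freeLie (ZMod m) A, Q.coeff (FreeMonoid.ofList w) = 0) ↔ (m : ℤ) ∣ c) ∧
    ((∀ Q ∈ freeLie (ZMod m) A, Q.coeff (FreeMonoid.ofList w) = 0) ↔
      ∀ v : FreeMonoid A, (m : ℤ) ∣ (lstar ℤ w).coeff v) := by
  have hred := forall_coeff_freeLie_eq_zero_iff (A := A) (Int.castRingHom (ZMod m))
    ZMod.intCast_surjective (FreeMonoid.ofList w)
  rw [ZMod.ker_intCastRingHom] at hred
  have hlstar := hred.trans (forall_coeff_freeLie_mem_iff _ w)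
  simp only [Ideal.mem_span_singleton] at hred hlstar
  have hc : (∀ P ∈ freeLie ℤ A, (m : ℤ) ∣ P.coeff (FreeMonoid.ofList w)) ↔ (m : ℤ) ∣ c := by
    refine ⟨fun h => ?_, fun hmc P hP => hmc.trans ((hgen _).mp ⟨P, hP, rfl⟩)⟩
    obtain ⟨Q, hQ, hQc⟩ := (hgen c).mpr dvd_rfl
    exact hQc ▸ h Q hQ
  exact ⟨hred.trans hc, hlstar⟩

/-- for `m ≥ 2`, a word `w` lies outside the support of `L_{ℤ/m}(A)`
iff `m ∣ c(w)`, equivalently iff `m` divides every coefficient of the integer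
polynomial `l*(w)`. -/
theorem not_mem_support_zmod_iff {A : Type*} [Fintype A] (m : ℕ) (hm : 2 ≤ m)
    (w : List A) (c : ℤ) (hc0 : 0 ≤ c)
    (hgen : ∀ k : ℤ, (∃ Q ∈ freeLie ℤ A, Q.coeff (FreeMonoid.ofList w) = k) ↔ c ∣ k) :
    ((∀ Q ∈ freeLie (ZMod m) A, Q.coeff (FreeMonoid.ofList w) = 0) ↔ (m : ℤ) ∣ c) ∧
    ((∀ Q ∈ freeLie (ZMod m) A, Q.coeff (FreeMonoid.ofList w) = 0) ↔
      ∀ v : FreeMonoid A, (m : ℤ) ∣ (lstar ℤ w).coeff v) :=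
  not_mem_support_zmod_iff_general m w c hgen
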